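/- For every j ∈ {1,…,k-1} one has 1 + (t_j + t_{j+1})/2 ≤ (3π/4 + 1)·(1 + t_j). -/

import Mathlib

/-!
Put `φ x = arcsin x + π / 2 = ∫_{-1}^x ds / √(1 - s²)`, so that `1 + x = 1 - cos (φ x)`.
Since `g` is increasing, `g (t_j)` bounds `g` from above on `[-1, t_j]` and from below on
`[t_j, t_{j+1}]`. The weighted mass `j π / k` of the first interval is at least the mass `π / k`
of the second, hence `φ (t_{j+1}) - φ (t_j) ≤ φ (t_j)`. Doubling an angle of `[0, π]` at most
quadruples `1 - cos`, so `1 + t_{j+1} ≤ 4 (1 + t_j)`, and `5 / 2 ≤ 3π / 4 + 1`.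
-/

open Real MeasureTheory Set

lemma hasDerivAt_arcsin_of_mem_Ioo {x : ℝ} (hx : x ∈ Ioo (-1 : ℝ) 1) :
    HasDerivAt arcsin (1 / √(1 - x ^ 2)) x :=
  hasDerivAt_arcsin hx.1.ne' hx.2.ne

section ArcsineWeight

variable {a b : ℝ}

lemma intervalIntegrable_one_div_sqrt_one_sub_sq (ha : -1 ≤ a) (hab : a ≤ b) (hb : b ≤ 1) :
    IntervalIntegrable (fun s => 1 / √(1 - s ^ 2)) volume a b := by
  refine intervalIntegral.intervalIntegrable_deriv_of_nonneg continuous_arcsin.continuousOn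
    (fun x hx => hasDerivAt_arcsin_of_mem_Ioo ?_) (fun x _ => by positivity)
  rw [min_eq_left hab, max_eq_right hab] at hx
  exact ⟨ha.trans_lt hx.1, hx.2.trans_le hb⟩

lemma integral_one_div_sqrt_one_sub_sq (ha : -1 ≤ a) (hab : a ≤ b) (hb : b ≤ 1) :
    ∫ s in a..b, 1 / √(1 - s ^ 2) = arcsin b - arcsin a :=
  intervalIntegral.integral_eq_sub_of_hasDerivAt_of_le hab continuous_arcsin.continuousOn
    (fun _ hx => hasDerivAt_arcsin_of_mem_Ioo ⟨ha.trans_lt hx.1, hx.2.trans_le hb⟩)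
    (intervalIntegrable_one_div_sqrt_one_sub_sq ha hab hb)

variable {g : ℝ → ℝ}

lemma integral_div_sqrt_one_sub_sq_le_of_monotoneOn (hg : MonotoneOn g (Icc a b))
    (ha : -1 ≤ a) (hab : a ≤ b) (hb : b ≤ 1)
    (hint : IntervalIntegrable (fun s => g s / √(1 - s ^ 2)) volume a b) :
    ∫ s in a..b, g s / √(1 - s ^ 2) ≤ g b * (arcsin b - arcsin a) := by
  rw [← integral_one_div_sqrt_one_sub_sq ha hab hb, ← intervalIntegral.integral_const_mul]
  refine intervalIntegral.integral_mono_on hab hint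
    ((intervalIntegrable_one_div_sqrt_one_sub_sq ha hab hb).const_mul _) fun s hs => ?_
  rw [mul_one_div]
  exact div_le_div_of_nonneg_right (hg hs (right_mem_Icc.2 hab) hs.2) (sqrt_nonneg _)

lemma le_integral_div_sqrt_one_sub_sq_of_monotoneOn (hg : MonotoneOn g (Icc a b))
    (ha : -1 ≤ a) (hab : a ≤ b) (hb : b ≤ 1)
    (hint : IntervalIntegrable (fun s => g s / √(1 - s ^ 2)) volume a b) :
    g a * (arcsin b - arcsin a) ≤ ∫ s in a..b, g s / √(1 - s ^ 2) := by
  rw [← integral_one_div_sqrt_one_sub_sq ha hab hb, ← intervalIntegral.integral_const_mul]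
  refine intervalIntegral.integral_mono_on hab
    ((intervalIntegrable_one_div_sqrt_one_sub_sq ha hab hb).const_mul _) hint fun s hs => ?_
  rw [mul_one_div]
  exact div_le_div_of_nonneg_right (hg (left_mem_Icc.2 hab) hs hs.1) (sqrt_nonneg _)

lemma arcsin_sub_le_arcsin_add_pi_div_two_of_integral_le (hg : MonotoneOn g (Icc (-1) 1))
    (ha : -1 ≤ a) (hab : a ≤ b) (hb : b ≤ 1)
    (hint : IntervalIntegrable (fun s => g s / √(1 - s ^ 2)) volume (-1) b)
    (hpos : 0 < ∫ s in (-1)..a, g s / √(1 - s ^ 2))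
    (hle : ∫ s in a..b, g s / √(1 - s ^ 2) ≤ ∫ s in (-1)..a, g s / √(1 - s ^ 2)) :
    arcsin b - arcsin a ≤ arcsin a + π / 2 := by
  have hint₁ := hint.mono_set (uIcc_subset_uIcc_left (mem_uIcc_of_le ha hab))
  have hint₂ := hint.mono_set (uIcc_subset_uIcc_right (mem_uIcc_of_le ha hab))
  have upper := integral_div_sqrt_one_sub_sq_le_of_monotoneOn
    (hg.mono (Icc_subset_Icc le_rfl (hab.trans hb))) le_rfl ha (hab.trans hb) hint₁
  rw [arcsin_neg_one, sub_neg_eq_add] at upper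
  have lower := le_integral_div_sqrt_one_sub_sq_of_monotoneOn
    (hg.mono (Icc_subset_Icc ha hb)) ha hab hb hint₂
  have hga : 0 < g a :=
    pos_of_mul_pos_left (hpos.trans_le upper) (by linarith [neg_pi_div_two_le_arcsin a])
  exact le_of_mul_le_mul_left (lower.trans (hle.trans upper)) hga

end ArcsineWeight

lemma one_sub_cos_le_four_mul_one_sub_cos {φ ψ : ℝ} (hφ : φ ≤ π) (hψ₀ : 0 ≤ ψ) (hψ : ψ ≤ π)
    (hψφ : ψ ≤ 2 * φ) : 1 - cos ψ ≤ 4 * (1 - cos φ) := by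
  rcases le_total φ (π / 2) with h | h
  · -- `1 - cos (2φ) = 2 (1 - cos φ) (1 + cos φ)`
    have hcos : cos (2 * φ) ≤ cos ψ := cos_le_cos_of_nonneg_of_le_pi hψ₀ (by linarith) hψφ
    rw [cos_two_mul] at hcos
    nlinarith [cos_le_one φ, neg_one_le_cos φ]
  · nlinarith [cos_nonpos_of_pi_div_two_le_of_le h (by linarith), neg_one_le_cos ψ]

lemma one_add_le_four_mul_one_add_of_arcsin_sub_le {x y : ℝ} (hx : x ∈ Icc (-1 : ℝ) 1)
    (hy : y ∈ Icc (-1 : ℝ) 1) (h : arcsin y - arcsin x ≤ arcsin x + π / 2) :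
    1 + y ≤ 4 * (1 + x) := by
  have key := one_sub_cos_le_four_mul_one_sub_cos (φ := arcsin x + π / 2) (ψ := arcsin y + π / 2)
    (by linarith [arcsin_le_pi_div_two x]) (by linarith [neg_pi_div_two_le_arcsin y])
    (by linarith [arcsin_le_pi_div_two y]) (by linarith)
  rwa [cos_add_pi_div_two, cos_add_pi_div_two, sin_arcsin hx.1 hx.2, sin_arcsin hy.1 hy.2,
    sub_neg_eq_add, sub_neg_eq_add] at key

theorem stmt_12_general (k : ℕ) (g : ℝ → ℝ)
    (hgmono : MonotoneOn g (Set.Icc (-1:ℝ) 1))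
    (t : ℕ → ℝ)
    (htmem : ∀ j ≤ k, t j ∈ Set.Icc (-1:ℝ) 1)
    (htmono : ∀ i j : ℕ, i < j → j ≤ k → t i < t j)
    (htW : ∀ j ≤ k,
      ((k : ℝ) / π) * ∫ s in (-1:ℝ)..(t j), g s / Real.sqrt (1 - s ^ 2) = (j : ℝ))
    :
    ∀ j : ℕ, 1 ≤ j → j < k →
      1 + (t j + t (j + 1)) / 2 ≤ (3 * π / 4 + 1) * (1 + t j) := by
  intro j hj hjk
  have hk : (k : ℝ) ≠ 0 := by exact_mod_cast (j.zero_le.trans_lt hjk).ne'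
  have hj' : (1 : ℝ) ≤ j := by exact_mod_cast hj
  have hW : ∀ m ≤ k, ∫ s in (-1:ℝ)..(t m), g s / √(1 - s ^ 2) = m * π / k := by
    intro m hm
    rw [← htW m hm]
    field_simp
  have htj := htmem j hjk.le
  have htj₁ := htmem (j + 1) hjk
  have hint : IntervalIntegrable (fun s => g s / √(1 - s ^ 2)) volume (-1) (t (j + 1)) :=
    intervalIntegral.intervalIntegrable_of_integral_ne_zero (by rw [hW _ hjk]; positivity)
  have hlt := htmono j (j + 1) j.lt_succ_self hjk
  have hstep : ∫ s in (t j)..(t (j + 1)), g s / √(1 - s ^ 2) = π / k := by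
    rw [← intervalIntegral.integral_interval_sub_left hint
      (hint.mono_set (uIcc_subset_uIcc_left (mem_uIcc_of_le htj.1 hlt.le))),
      hW _ hjk, hW _ hjk.le]
    push_cast
    ring
  have hquad : 1 + t (j + 1) ≤ 4 * (1 + t j) :=
    one_add_le_four_mul_one_add_of_arcsin_sub_le htj htj₁
      (arcsin_sub_le_arcsin_add_pi_div_two_of_integral_le hgmono htj.1 hlt.le htj₁.2 hint
        (by rw [hW _ hjk.le]; positivity)
        (by rw [hstep, hW _ hjk.le]; gcongr; exact le_mul_of_one_le_left pi_pos.le hj'))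
  nlinarith [pi_gt_three, htj.1]

theorem stmt_12 (k : ℕ) (hk : 2 ≤ k) (g : ℝ → ℝ)
    (hg0 : ∀ x ∈ Set.Icc (-1:ℝ) 1, 0 ≤ g x)
    (hgmono : MonotoneOn g (Set.Icc (-1:ℝ) 1))
    (hgconc : ConcaveOn ℝ (Set.Icc (-1:ℝ) 1) g)
    (hgconv : ConvexOn ℝ (Set.Ioo (-1:ℝ) 1) (fun s => g s / (1 + s)))
    (hnorm : (1 / π) * ∫ s in (-1:ℝ)..1, g s / Real.sqrt (1 - s ^ 2) = 1)
    (t : ℕ → ℝ)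
    (ht0 : t 0 = -1) (htk : t k = 1)
    (htmem : ∀ j ≤ k, t j ∈ Set.Icc (-1:ℝ) 1)
    (htmono : ∀ i j : ℕ, i < j → j ≤ k → t i < t j)
    (htW : ∀ j ≤ k,
      ((k : ℝ) / π) * ∫ s in (-1:ℝ)..(t j), g s / Real.sqrt (1 - s ^ 2) = (j : ℝ))
    :
    ∀ j : ℕ, 1 ≤ j → j < k →
      1 + (t j + t (j + 1)) / 2 ≤ (3 * π / 4 + 1) * (1 + t j) :=
  stmt_12_general k g hgmono t htmem htmono htW
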